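/- For s ∈ [0, 1], define e_s : [−1, 1] → ℝ by e_s(m) = −s·m⁵ − (1 − s)·√(1 − m²). Then there exists s* ∈ (0, 1) and two distinct points m₁ ≠ m₂ in [−1, 1] such that e_{s*} attains its global minimum on [−1, 1] at both m₁ and m₂; i.e. at the transition point the classical energy of the ferromagnetic p-spin model with p = 5 has (at least) two distinct global minimizers, so the global minimizer is discontinuous in s and the quantum phase transition is first order. -/

import Mathlib

/-!
Write `s = k / (1 + k)`. Then `(1 + k) (e_s(m) - e_s(0)) = 1 - √(1 - m²) - k mᵖ`, so `m = 0`
is a global minimiser exactly when `k mᵖ ≤ 1 - √(1 - m²)` on `[-1, 1]`. Since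
`1 - √(1 - m²) ≥ m² / 2` and `p ≥ 3`, this only constrains `m ∈ [1/2, 1]`, where the ratio
`(1 - √(1 - m²)) / mᵖ` is continuous and attains its minimum `k ∈ (0, 1]` at some `m*`. For this
critical `k` the inequality holds everywhere and is an equality at `m*`, so `0` and `m* ≥ 1/2`
are both global minimisers.
-/

open Set Real

noncomputable def spinEnergy (p : ℕ) (s m : ℝ) : ℝ := -s * m ^ p - (1 - s) * √(1 - m ^ 2)

lemma sq_div_two_le_one_sub_sqrt_one_sub_sq {m : ℝ} (hm : m ^ 2 ≤ 1) :
    m ^ 2 / 2 ≤ 1 - √(1 - m ^ 2) := by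
  have : √(1 - m ^ 2) ≤ 1 - m ^ 2 / 2 :=
    (sqrt_le_left (by linarith)).2 (by nlinarith [sq_nonneg (m ^ 2)])
  linarith

lemma pow_le_one_sub_sqrt_one_sub_sq {p : ℕ} (hp : 3 ≤ p) {m : ℝ} (hm₀ : 0 ≤ m)
    (hm : m ≤ 1 / 2) :
    m ^ p ≤ 1 - √(1 - m ^ 2) := by
  have hsplit : m ^ p = m ^ 2 * m ^ (p - 2) := by rw [← pow_add]; congr 1; omega
  have hsmall : m ^ (p - 2) ≤ 1 / 2 :=
    (pow_le_pow_of_le_one hm₀ (by linarith) (by omega : 1 ≤ p - 2)).trans (by simpa using hm)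
  calc m ^ p ≤ m ^ 2 * (1 / 2) := by rw [hsplit]; gcongr
    _ = m ^ 2 / 2 := by ring
    _ ≤ 1 - √(1 - m ^ 2) := sq_div_two_le_one_sub_sqrt_one_sub_sq (by nlinarith)

lemma exists_critical_coupling {p : ℕ} (hp : 3 ≤ p) :
    ∃ k > 0, ∃ m₀ ∈ Icc (1 / 2 : ℝ) 1, k * m₀ ^ p = 1 - √(1 - m₀ ^ 2) ∧
      ∀ m ∈ Icc (0 : ℝ) 1, k * m ^ p ≤ 1 - √(1 - m ^ 2) := by
  set ratio : ℝ → ℝ := fun m ↦ (1 - √(1 - m ^ 2)) / m ^ p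
  have hcont : ContinuousOn ratio (Icc (1 / 2) 1) :=
    ContinuousOn.div (by fun_prop) (by fun_prop) fun m hm ↦ pow_ne_zero _ (by linarith [hm.1])
  obtain ⟨m₀, hm₀, hmin⟩ := isCompact_Icc.exists_isMinOn ⟨1, by norm_num⟩ hcont
  have hm₀p : 0 < m₀ ^ p := pow_pos (by linarith [hm₀.1]) p
  have hk_le_one : ratio m₀ ≤ 1 := by
    simpa [ratio] using hmin (show (1 : ℝ) ∈ Icc (1 / 2) 1 by norm_num)
  have hgap : 0 < 1 - √(1 - m₀ ^ 2) := by
    have : √(1 - m₀ ^ 2) < 1 := (sqrt_lt' one_pos).2 (by nlinarith [hm₀.1])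
    linarith
  refine ⟨ratio m₀, div_pos hgap hm₀p, m₀, hm₀, div_mul_cancel₀ _ hm₀p.ne', fun m hm ↦ ?_⟩
  rcases le_or_gt m (1 / 2) with hsmall | hlarge
  · calc ratio m₀ * m ^ p ≤ 1 * m ^ p := by gcongr; exact pow_nonneg hm.1 p
      _ ≤ 1 - √(1 - m ^ 2) := by
        simpa using pow_le_one_sub_sqrt_one_sub_sq hp hm.1 hsmall
  · have hmp : 0 < m ^ p := pow_pos (by linarith) p
    calc ratio m₀ * m ^ p ≤ ratio m * m ^ p := by gcongr; exact hmin ⟨hlarge.le, hm.2⟩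
      _ = 1 - √(1 - m ^ 2) := div_mul_cancel₀ _ hmp.ne'

lemma spinEnergy_sub_spinEnergy_zero {p : ℕ} (hp : p ≠ 0) {k : ℝ} (hk : 0 ≤ k) (m : ℝ) :
    spinEnergy p (k / (1 + k)) m - spinEnergy p (k / (1 + k)) 0 =
      (1 - √(1 - m ^ 2) - k * m ^ p) / (1 + k) := by
  have : (1 + k) ≠ 0 := by positivity
  simp only [spinEnergy, zero_pow hp, zero_pow two_ne_zero, sub_zero, sqrt_one]
  field_simp
  ring

theorem spinEnergy_coexisting_minima {p : ℕ} (hp : 3 ≤ p) :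
    ∃ s ∈ Ioo (0 : ℝ) 1, ∃ m₀ ∈ Icc (1 / 2 : ℝ) 1,
      IsMinOn (spinEnergy p s) (Icc (-1) 1) 0 ∧ IsMinOn (spinEnergy p s) (Icc (-1) 1) m₀ := by
  obtain ⟨k, hk, m₀, hm₀, hk_eq, hk_le⟩ := exists_critical_coupling hp
  have hp₀ : p ≠ 0 := by omega
  have hs : k / (1 + k) ∈ Ioo (0 : ℝ) 1 :=
    ⟨by positivity, (div_lt_one (by positivity)).2 (by linarith)⟩
  have hmin : IsMinOn (spinEnergy p (k / (1 + k))) (Icc (-1) 1) 0 := by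
    intro m hm
    have habs : |m| ∈ Icc (0 : ℝ) 1 := ⟨abs_nonneg m, abs_le.2 hm⟩
    have hbound : k * m ^ p ≤ 1 - √(1 - m ^ 2) :=
      calc k * m ^ p ≤ k * |m| ^ p :=
            mul_le_mul_of_nonneg_left ((le_abs_self _).trans (abs_pow m p).le) hk.le
        _ ≤ 1 - √(1 - |m| ^ 2) := hk_le |m| habs
        _ = 1 - √(1 - m ^ 2) := by rw [sq_abs]
    have hdiff_nonneg : 0 ≤ (1 - √(1 - m ^ 2) - k * m ^ p) / (1 + k) :=
      div_nonneg (by linarith) (by positivity)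
    rw [← spinEnergy_sub_spinEnergy_zero hp₀ hk.le m, sub_nonneg] at hdiff_nonneg
    exact hdiff_nonneg
  have htie : spinEnergy p (k / (1 + k)) m₀ = spinEnergy p (k / (1 + k)) 0 := by
    rw [← sub_eq_zero, spinEnergy_sub_spinEnergy_zero hp₀ hk.le, hk_eq, sub_self, zero_div]
  exact ⟨_, hs, m₀, hm₀, hmin, fun m hm ↦ htie ▸ hmin hm⟩

/-- For the p = 5 ferromagnetic p-spin classical energy
e_s(m) = −s·m⁵ − (1−s)·√(1−m²) on [−1,1], there exist s* ∈ (0,1) and two distinct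
points m₁ ≠ m₂ in [−1,1] at which e_{s*} attains its global minimum on [−1,1]:
the transition is first order (two coexisting global minima). -/
theorem p5_spin_first_order_QPT :
    ∃ s ∈ Set.Ioo (0 : ℝ) 1, ∃ m₁ ∈ Set.Icc (-1 : ℝ) 1, ∃ m₂ ∈ Set.Icc (-1 : ℝ) 1,
      m₁ ≠ m₂ ∧
      (∀ m ∈ Set.Icc (-1 : ℝ) 1,
        -s * m₁ ^ 5 - (1 - s) * Real.sqrt (1 - m₁ ^ 2) ≤
          -s * m ^ 5 - (1 - s) * Real.sqrt (1 - m ^ 2)) ∧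
      (∀ m ∈ Set.Icc (-1 : ℝ) 1,
        -s * m₂ ^ 5 - (1 - s) * Real.sqrt (1 - m₂ ^ 2) ≤
          -s * m ^ 5 - (1 - s) * Real.sqrt (1 - m ^ 2)) := by
  obtain ⟨s, hs, m₀, hm₀, hmin_zero, hmin_m₀⟩ :=
    spinEnergy_coexisting_minima (p := 5) (by norm_num)
  exact ⟨s, hs, 0, by norm_num, m₀, ⟨by linarith [hm₀.1], hm₀.2⟩, by linarith [hm₀.1],
    hmin_zero, hmin_m₀⟩
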